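/- arXiv:2605.15896 — 2 statements merged into one kernel-verified Lean document; each statement's English description precedes it below -/
import Mathlib

section
/- Let λ ~ Gamma(κ, κ/μ), N | λ ~ Poisson(λ), and conditional on N let N^{obs} | N ~ Binomial(N, F) with N^{IBNR} = N − N^{obs}, for constants κ, μ > 0 and F ∈ (0,1). Then the conditional distribution of N^{IBNR} given N^{obs} = n is Negative Binomial with shape parameter n + κ and success probability (κ + μF)/(κ + μ). -/
open MeasureTheory ProbabilityTheory Real
open scoped NNReal ENNReal

/-- PMF of the Negative Binomial distribution with real shape `r` and success
probability `p`: `P(X = m) = Γ(m+r)/(Γ(r) m!) · p^r (1−p)^m`. -/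
noncomputable def negBinPMFReal (r p : ℝ) (m : ℕ) : ℝ :=
  (Real.Gamma (m + r) / (Real.Gamma r * (m.factorial : ℝ))) * p ^ r * (1 - p) ^ m

/-- The normalizing constant appearing when a Gamma pdf is multiplied by a Poisson pmf. -/
noncomputable def genConst (a r c : ℝ) (k : ℕ) : ℝ :=
  r ^ a * c ^ k * Real.Gamma (a + k) / (Real.Gamma a * (k.factorial : ℝ) * (r + c) ^ (a + (k : ℝ)))

lemma genConst_nonneg {a r c : ℝ} (ha : 0 < a) (hr : 0 < r) (hc : 0 < c) (k : ℕ) :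
    0 ≤ genConst a r c k := by
  have h1 : 0 < Real.Gamma a := Real.Gamma_pos_of_pos ha
  have h2 : 0 < Real.Gamma (a + k) := Real.Gamma_pos_of_pos (by positivity)
  unfold genConst
  positivity

/-- Gamma–Poisson conjugacy, pointwise form (away from `l = 0`). -/
lemma gp_mul {a r c : ℝ} (ha : 0 < a) (hr : 0 < r) (hc : 0 < c) (k : ℕ) {l : ℝ} (hl : l ≠ 0) :
    gammaPDFReal a r l * poissonPMFReal (l * c).toNNReal k
      = genConst a r c k * gammaPDFReal (a + k) (r + c) l := by
  rcases hl.lt_or_gt with h | h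
  · unfold gammaPDFReal
    rw [if_neg (not_le.mpr h), if_neg (not_le.mpr h)]
    ring
  · have hΓa : Real.Gamma a ≠ 0 := (Real.Gamma_pos_of_pos ha).ne'
    have hΓak : Real.Gamma (a + k) ≠ 0 := (Real.Gamma_pos_of_pos (by positivity)).ne'
    have hrc : (0:ℝ) < r + c := by positivity
    have hrck : (r + c) ^ (a + (k:ℝ)) ≠ 0 := (Real.rpow_pos_of_pos hrc _).ne'
    have hkfac : (k.factorial : ℝ) ≠ 0 := Nat.cast_ne_zero.mpr k.factorial_ne_zero
    unfold gammaPDFReal poissonPMFReal genConst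
    rw [if_pos h.le, if_pos h.le, Real.coe_toNNReal _ (by positivity)]
    have hexp : rexp (-(r * l)) * rexp (-(l * c)) = rexp (-((r + c) * l)) := by
      rw [← Real.exp_add]; ring_nf
    have hpow : l ^ (a - 1) * l ^ k = l ^ (a + (k:ℝ) - 1) := by
      rw [← Real.rpow_natCast l k, ← Real.rpow_add h]; ring_nf
    calc r ^ a / Real.Gamma a * l ^ (a - 1) * rexp (-(r * l)) *
          (rexp (-(l * c)) * (l * c) ^ k / (k.factorial : ℝ))
        = r ^ a * c ^ k / (Real.Gamma a * (k.factorial : ℝ)) * (l ^ (a - 1) * l ^ k) *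
            (rexp (-(r * l)) * rexp (-(l * c))) := by rw [mul_pow]; ring
      _ = r ^ a * c ^ k / (Real.Gamma a * (k.factorial : ℝ)) * l ^ (a + (k:ℝ) - 1) *
            rexp (-((r + c) * l)) := by rw [hpow, hexp]
      _ = _ := by field_simp

lemma lintegral_ofReal_const_mul_gamma {a r c : ℝ} (ha : 0 < a) (hr : 0 < r) (hc : 0 ≤ c) :
    ∫⁻ l : ℝ, ENNReal.ofReal (c * gammaPDFReal a r l) = ENNReal.ofReal c := by
  simp_rw [ENNReal.ofReal_mul hc]
  rw [lintegral_const_mul _ ((measurable_gammaPDFReal a r).ennreal_ofReal)]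
  have h := lintegral_gammaPDF_eq_one ha hr
  simp only [gammaPDF] at h
  rw [h, mul_one]

lemma measurable_poisson_comp (c : ℝ) (k : ℕ) :
    Measurable fun l : ℝ => poissonPMFReal (l * c).toNNReal k := by
  unfold poissonPMFReal
  fun_prop

lemma tsum_ofReal_poisson (r : ℝ≥0) :
    ∑' k : ℕ, ENNReal.ofReal (poissonPMFReal r k) = 1 := by
  rw [← ENNReal.ofReal_tsum_of_nonneg (fun _ => poissonPMFReal_nonneg)
    (poissonPMFRealSum r).summable, HasSum.tsum_eq (f := fun n => poissonPMFReal r n) (poissonPMFRealSum r), ENNReal.ofReal_one]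

/-- Tonelli + the Poisson pmf summing to one. -/
lemma key_swap (A : ℝ → ℝ) (hA : ∀ l, 0 ≤ A l) (hAm : Measurable A) (c : ℝ) :
    ∑' k : ℕ, ∫⁻ l : ℝ, ENNReal.ofReal (A l * poissonPMFReal (l * c).toNNReal k)
      = ∫⁻ l : ℝ, ENNReal.ofReal (A l) := by
  rw [← lintegral_tsum (f := fun k l => ENNReal.ofReal (A l * poissonPMFReal (l * c).toNNReal k))
    (fun k => ((hAm.mul (measurable_poisson_comp c k)).ennreal_ofReal).aemeasurable)]
  refine lintegral_congr fun l => ?_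
  simp_rw [ENNReal.ofReal_mul (hA l)]
  rw [ENNReal.tsum_mul_left, tsum_ofReal_poisson, mul_one]

lemma genConst_eq_negBin {κ μ F : ℝ} (hκ : 0 < κ) (hμ : 0 < μ) (hF0 : 0 < F) (hF1 : F < 1)
    (n m : ℕ) :
    genConst (κ + n) (κ / μ + F) (1 - F) m
      = negBinPMFReal ((n : ℝ) + κ) ((κ + μ * F) / (κ + μ)) m := by
  have hA : (0:ℝ) < κ / μ + F := by positivity
  have hB : (0:ℝ) < κ / μ + 1 := by positivity
  have hκμ : κ + μ ≠ 0 := by positivity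
  have e1 : κ / μ + F + (1 - F) = κ / μ + 1 := by ring
  have e2 : (κ + μ * F) / (κ + μ) = (κ / μ + F) / (κ / μ + 1) := by
    field_simp
  have e3 : 1 - (κ + μ * F) / (κ + μ) = (1 - F) / (κ / μ + 1) := by
    field_simp
    ring
  unfold genConst negBinPMFReal
  rw [e1, e3, e2, Real.div_rpow hA.le hB.le, div_pow,
    show κ + (n:ℝ) = (n:ℝ) + κ by ring,
    Real.rpow_add hB, Real.rpow_natCast,
    show ((n:ℝ) + κ) + (m:ℝ) = (m:ℝ) + ((n:ℝ) + κ) by ring]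
  have hΓ : Real.Gamma ((n:ℝ) + κ) ≠ 0 := (Real.Gamma_pos_of_pos (by positivity)).ne'
  have hmf : ((m.factorial : ℝ)) ≠ 0 := Nat.cast_ne_zero.mpr m.factorial_ne_zero
  have hBn : (κ / μ + 1) ^ ((n:ℝ) + κ) ≠ 0 := (Real.rpow_pos_of_pos hB _).ne'
  have hBm : (κ / μ + 1) ^ m ≠ 0 := (pow_pos hB m).ne'
  have hAn : (κ / μ + F) ^ ((n:ℝ) + κ) ≠ 0 := (Real.rpow_pos_of_pos hA _).ne'
  field_simp

/-- Let `λ ~ Gamma(κ, κ/μ)`, `N | λ ~ Poisson(λ)`, and let `N^{obs}`,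
`N^{IBNR}` be the `F`- and `(1−F)`-thinnings of `N` (jointly: conditionally on `λ`,
independent Poisson with rates `λF` and `λ(1−F)`). Then the conditional distribution of
`N^{IBNR}` given `N^{obs} = n` is NegBin with shape `n + κ` and success probability
`(κ + μF)/(κ + μ)`. -/
theorem ibnr_negbin {Ω : Type*} [MeasurableSpace Ω] (P : Measure Ω)
    [IsProbabilityMeasure P] (Nobs Nibnr : Ω → ℕ) (κ μ F : ℝ)
    (hκ : 0 < κ) (hμ : 0 < μ) (hF0 : 0 < F) (hF1 : F < 1)
    (hjoint : ∀ n m : ℕ,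
      P {ω | Nobs ω = n ∧ Nibnr ω = m} =
        ∫⁻ l : ℝ, ENNReal.ofReal (gammaPDFReal κ (κ / μ) l *
          poissonPMFReal (Real.toNNReal (l * F)) n *
          poissonPMFReal (Real.toNNReal (l * (1 - F))) m)) :
    ∀ n m : ℕ,
      P {ω | Nobs ω = n ∧ Nibnr ω = m} =
        P {ω | Nobs ω = n} *
          ENNReal.ofReal (negBinPMFReal ((n : ℝ) + κ) ((κ + μ * F) / (κ + μ)) m) := by
  have hrμ : (0:ℝ) < κ / μ := by positivity
  have h1F : (0:ℝ) < 1 - F := by linarith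
  -- value of the joint probabilities
  have hjointval : ∀ n' m' : ℕ, P {ω | Nobs ω = n' ∧ Nibnr ω = m'}
      = ENNReal.ofReal (genConst κ (κ/μ) F n' * genConst (κ + n') (κ/μ + F) (1 - F) m') := by
    intro n' m'
    rw [hjoint n' m']
    have hae : (fun l : ℝ => ENNReal.ofReal (gammaPDFReal κ (κ/μ) l *
          poissonPMFReal (Real.toNNReal (l * F)) n' *
          poissonPMFReal (Real.toNNReal (l * (1 - F))) m'))
        =ᵐ[volume] fun l : ℝ => ENNReal.ofReal
          ((genConst κ (κ/μ) F n' * genConst (κ + n') (κ/μ + F) (1 - F) m') *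
            gammaPDFReal (κ + n' + m') ((κ/μ + F) + (1 - F)) l) := by
      filter_upwards [compl_mem_ae_iff.mpr (measure_singleton (0:ℝ))] with l hl
      have hl0 : l ≠ 0 := by simpa using hl
      rw [gp_mul hκ hrμ hF0 n' hl0, mul_assoc,
        gp_mul (by positivity : (0:ℝ) < κ + n') (by positivity) h1F m' hl0, ← mul_assoc]
    rw [lintegral_congr_ae hae,
      lintegral_ofReal_const_mul_gamma (by positivity) (add_pos (by positivity) h1F)
        (mul_nonneg (genConst_nonneg hκ hrμ hF0 n')
          (genConst_nonneg (by positivity) (by positivity) h1F m'))]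
  -- value of the summed-out joint probabilities
  have hSval : ∀ n' : ℕ, (∑' m' : ℕ, P {ω | Nobs ω = n' ∧ Nibnr ω = m'})
      = ENNReal.ofReal (genConst κ (κ/μ) F n') := by
    intro n'
    simp_rw [hjoint n']
    rw [key_swap _ (fun l => mul_nonneg (gammaPDFReal_nonneg hκ hrμ l) poissonPMFReal_nonneg)
      ((measurable_gammaPDFReal _ _).mul (measurable_poisson_comp F n')) (1 - F)]
    have hae : (fun l : ℝ => ENNReal.ofReal (gammaPDFReal κ (κ/μ) l *
          poissonPMFReal (Real.toNNReal (l * F)) n'))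
        =ᵐ[volume] fun l : ℝ => ENNReal.ofReal
          (genConst κ (κ/μ) F n' * gammaPDFReal (κ + n') (κ/μ + F) l) := by
      filter_upwards [compl_mem_ae_iff.mpr (measure_singleton (0:ℝ))] with l hl
      have hl0 : l ≠ 0 := by simpa using hl
      rw [gp_mul hκ hrμ hF0 n' hl0]
    rw [lintegral_congr_ae hae,
      lintegral_ofReal_const_mul_gamma (by positivity) (by positivity)
        (genConst_nonneg hκ hrμ hF0 n')]
  -- total mass one
  have htotal : (∑' n' : ℕ, ∑' m' : ℕ, P {ω | Nobs ω = n' ∧ Nibnr ω = m'}) = 1 := by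
    calc ∑' n' : ℕ, ∑' m' : ℕ, P {ω | Nobs ω = n' ∧ Nibnr ω = m'}
        = ∑' n' : ℕ, ∫⁻ l : ℝ, ENNReal.ofReal (gammaPDFReal κ (κ/μ) l *
            poissonPMFReal (Real.toNNReal (l * F)) n') := by
          refine tsum_congr fun n' => ?_
          simp_rw [hjoint n']
          exact key_swap _
            (fun l => mul_nonneg (gammaPDFReal_nonneg hκ hrμ l) poissonPMFReal_nonneg)
            ((measurable_gammaPDFReal _ _).mul (measurable_poisson_comp F n')) (1 - F)
      _ = ∫⁻ l : ℝ, ENNReal.ofReal (gammaPDFReal κ (κ/μ) l) :=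
          key_swap _ (gammaPDFReal_nonneg hκ hrμ) (measurable_gammaPDFReal _ _) F
      _ = 1 := by
          have h := lintegral_gammaPDF_eq_one hκ hrμ
          simp only [gammaPDF] at h
          exact h
  -- set decomposition
  have hsetU : ∀ n' : ℕ, {ω | Nobs ω = n'} = ⋃ m' : ℕ, {ω | Nobs ω = n' ∧ Nibnr ω = m'} := by
    intro n'
    ext ω
    simp only [Set.mem_iUnion, Set.mem_setOf_eq]
    exact ⟨fun h => ⟨Nibnr ω, h, rfl⟩, fun ⟨_, h, _⟩ => h⟩
  -- marginal probabilities (sandwich argument, no measurability of `Nobs` needed)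
  have hmarg : ∀ n' : ℕ, P {ω | Nobs ω = n'}
      = ∑' m' : ℕ, P {ω | Nobs ω = n' ∧ Nibnr ω = m'} := by
    intro n'
    have hub : P {ω | Nobs ω = n'} ≤ ∑' m' : ℕ, P {ω | Nobs ω = n' ∧ Nibnr ω = m'} := by
      rw [hsetU n']
      exact measure_iUnion_le _
    set S : ℕ → ℝ≥0∞ := fun n'' => ∑' m' : ℕ, P {ω | Nobs ω = n'' ∧ Nibnr ω = m'} with hS
    have hR1 : S n' + (∑' n'' : ℕ, if n'' = n' then 0 else S n'') = 1 := by
      rw [← htotal, ENNReal.tsum_eq_add_tsum_ite (f := S) n']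
      congr 1
      exact tsum_congr fun n'' => by by_cases h : n'' = n' <;> simp [h]
    have hcov : (1:ℝ≥0∞) ≤ P {ω | Nobs ω = n'} +
        ∑' n'' : ℕ, (if n'' = n' then 0 else S n'') := by
      have hsub : (Set.univ : Set Ω) ⊆ {ω | Nobs ω = n'} ∪
          ⋃ n'' : ℕ, (if n'' = n' then (∅ : Set Ω) else {ω | Nobs ω = n''}) := by
        intro ω _
        by_cases h : Nobs ω = n'
        · exact Or.inl h
        · refine Or.inr (Set.mem_iUnion.mpr ⟨Nobs ω, ?_⟩)
          rw [if_neg h]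
          exact rfl
      calc (1:ℝ≥0∞) = P Set.univ := measure_univ.symm
        _ ≤ P ({ω | Nobs ω = n'} ∪
            ⋃ n'' : ℕ, (if n'' = n' then (∅ : Set Ω) else {ω | Nobs ω = n''})) :=
          measure_mono hsub
        _ ≤ P {ω | Nobs ω = n'} +
            P (⋃ n'' : ℕ, (if n'' = n' then (∅ : Set Ω) else {ω | Nobs ω = n''})) :=
          measure_union_le _ _
        _ ≤ P {ω | Nobs ω = n'} +
            ∑' n'' : ℕ, P (if n'' = n' then (∅ : Set Ω) else {ω | Nobs ω = n''}) :=
          add_le_add_right (measure_iUnion_le _) _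
        _ ≤ P {ω | Nobs ω = n'} + ∑' n'' : ℕ, (if n'' = n' then 0 else S n'') := by
          gcongr with n''
          split_ifs with h
          · simp
          · rw [hsetU n'']
            exact measure_iUnion_le _
    have hRtop : (∑' n'' : ℕ, if n'' = n' then 0 else S n'') ≠ ⊤ := by
      refine ne_top_of_le_ne_top ENNReal.one_ne_top ?_
      rw [← hR1]
      exact le_add_self
    have hlb : S n' ≤ P {ω | Nobs ω = n'} := by
      have h2 : S n' + (∑' n'' : ℕ, if n'' = n' then 0 else S n'')
          ≤ P {ω | Nobs ω = n'} + ∑' n'' : ℕ, (if n'' = n' then 0 else S n'') := by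
        rw [hR1]; exact hcov
      exact (ENNReal.add_le_add_iff_right hRtop).mp h2
    exact le_antisymm hub hlb
  -- conclusion
  intro n m
  rw [hjointval n m, hmarg n, hSval n, ← genConst_eq_negBin hκ hμ hF0 hF1 n m,
    ENNReal.ofReal_mul (genConst_nonneg hκ hrμ hF0 n)]
end

section
/- Let S be a positive random variable, and conditional on S let W ~ Beta(cF, c(1−F)) independent of S, with c > 0, F ∈ (0,1). Define X^{obs} = S·W and S^{IBNP} = S·(1−W). Then S^{IBNP} = X^{obs} · (1−W)/W almost surely, and if additionally cF > 1, then for W ~ Beta(cF, c(1−F)) and fixed x > 0, E[x(1−W)/W] = x(1−F)/(F − 1/c), which converges to x(1−F)/F as c → ∞. -/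
open MeasureTheory ProbabilityTheory Real Filter Topology

/-- Density of the Beta(a,b) distribution on (0,1). -/
noncomputable def betaPDFReal (a b x : ℝ) : ℝ :=
  if 0 < x ∧ x < 1 then
    (Real.Gamma (a + b) / (Real.Gamma a * Real.Gamma b)) * x ^ (a - 1) * (1 - x) ^ (b - 1)
  else 0

/-- The Beta(a,b) probability measure on ℝ. -/
noncomputable def betaMeasure (a b : ℝ) : Measure ℝ :=
  volume.withDensity fun x => ENNReal.ofReal (_root_.betaPDFReal a b x)

open scoped NNReal ENNReal in
lemma measurable_betaPDFReal (a b : ℝ) : Measurable (_root_.betaPDFReal a b) := by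
  unfold _root_.betaPDFReal
  have hset : MeasurableSet {x : ℝ | 0 < x ∧ x < 1} := by
    have : {x : ℝ | 0 < x ∧ x < 1} = Set.Ioo 0 1 := rfl
    rw [this]; exact measurableSet_Ioo
  exact Measurable.ite hset (by fun_prop) measurable_const

lemma betaPDFReal_nonneg {a b : ℝ} (ha : 0 < a) (hb : 0 < b) (x : ℝ) :
    0 ≤ _root_.betaPDFReal a b x := by
  unfold _root_.betaPDFReal
  split_ifs with h
  · have hC : 0 < Real.Gamma (a + b) / (Real.Gamma a * Real.Gamma b) :=
      div_pos (Real.Gamma_pos_of_pos (by linarith))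
        (mul_pos (Real.Gamma_pos_of_pos ha) (Real.Gamma_pos_of_pos hb))
    exact le_of_lt (mul_pos (mul_pos hC (Real.rpow_pos_of_pos h.1 _))
      (Real.rpow_pos_of_pos (by linarith [h.2]) _))
  · exact le_rfl

lemma real_betaIntegral {a b : ℝ} (ha : 0 < a) (hb : 0 < b) :
    ∫ x in Set.Ioo (0:ℝ) 1, x ^ (a - 1) * (1 - x) ^ (b - 1) =
      Real.Gamma a * Real.Gamma b / Real.Gamma (a + b) := by
  have h := Complex.Gamma_mul_Gamma_eq_betaIntegral (s := (a : ℂ)) (t := (b : ℂ))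
    (by simpa using ha) (by simpa using hb)
  have h2 : Complex.betaIntegral (a : ℂ) (b : ℂ) =
      ((∫ x in (0:ℝ)..1, x ^ (a - 1) * (1 - x) ^ (b - 1) : ℝ) : ℂ) := by
    rw [Complex.betaIntegral, ← intervalIntegral.integral_ofReal]
    refine intervalIntegral.integral_congr fun x hx => ?_
    rw [Set.uIcc_of_le zero_le_one] at hx
    rw [Complex.ofReal_mul, Complex.ofReal_cpow hx.1, Complex.ofReal_cpow (by linarith [hx.2])]
    push_cast
    ring
  rw [h2, show ((a:ℂ) + (b:ℂ)) = ((a + b : ℝ) : ℂ) by push_cast; ring,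
    Complex.Gamma_ofReal, Complex.Gamma_ofReal, Complex.Gamma_ofReal,
    ← Complex.ofReal_mul, ← Complex.ofReal_mul] at h
  have h4 : Real.Gamma a * Real.Gamma b =
      Real.Gamma (a + b) * ∫ x in (0:ℝ)..1, x ^ (a - 1) * (1 - x) ^ (b - 1) :=
    Complex.ofReal_inj.mp h
  have hG : Real.Gamma (a + b) ≠ 0 := ne_of_gt (Real.Gamma_pos_of_pos (by linarith))
  have h5 : ∫ x in (0:ℝ)..1, x ^ (a - 1) * (1 - x) ^ (b - 1) =
      Real.Gamma a * Real.Gamma b / Real.Gamma (a + b) := by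
    field_simp
    linarith [h4]
  rw [← h5, intervalIntegral.integral_of_le zero_le_one, integral_Ioc_eq_integral_Ioo]

open scoped NNReal ENNReal in
lemma beta_key' {a b : ℝ} (x : ℝ) (ha1 : 1 < a) (hb : 0 < b) :
    ∫ w, x * (1 - w) / w ∂(_root_.betaMeasure a b) = x * b / (a - 1) := by
  have ha : 0 < a := by linarith
  have hGa' : Real.Gamma a ≠ 0 := ne_of_gt (Real.Gamma_pos_of_pos ha)
  have hGb' : Real.Gamma b ≠ 0 := ne_of_gt (Real.Gamma_pos_of_pos hb)
  have hGab : Real.Gamma (a + b) ≠ 0 := ne_of_gt (Real.Gamma_pos_of_pos (by linarith))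
  have hGa1 : Real.Gamma (a - 1) ≠ 0 := ne_of_gt (Real.Gamma_pos_of_pos (by linarith))
  have hdens : (fun w => ENNReal.ofReal (_root_.betaPDFReal a b w)) =
      fun w => ((Real.toNNReal (_root_.betaPDFReal a b w) : ℝ≥0) : ℝ≥0∞) := by
    funext w; rfl
  have step1 : ∫ w, x * (1 - w) / w ∂(_root_.betaMeasure a b) =
      ∫ w, _root_.betaPDFReal a b w * (x * (1 - w) / w) := by
    rw [_root_.betaMeasure, hdens,
      integral_withDensity_eq_integral_smul
        ((_root_.measurable_betaPDFReal a b).real_toNNReal) _]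
    congr 1
    funext w
    rw [NNReal.smul_def, Real.coe_toNNReal _ (betaPDFReal_nonneg ha hb w), smul_eq_mul]
  set C := Real.Gamma (a + b) / (Real.Gamma a * Real.Gamma b) with hC_def
  have step2 : (fun w => _root_.betaPDFReal a b w * (x * (1 - w) / w)) =
      Set.indicator (Set.Ioo (0:ℝ) 1)
        (fun w => (x * C) * (w ^ (a - 1 - 1) * (1 - w) ^ (b + 1 - 1))) := by
    funext w
    by_cases hw : 0 < w ∧ w < 1
    · rw [Set.indicator_of_mem (by exact hw)]
      have hw0 : w ≠ 0 := ne_of_gt hw.1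
      have h1w : 0 < 1 - w := by linarith [hw.2]
      unfold _root_.betaPDFReal
      rw [if_pos hw]
      have e1 : w ^ (a - 1 - 1) = w ^ (a - 1) / w := by
        rw [Real.rpow_sub hw.1, Real.rpow_one]
      have e2 : (1 - w) ^ (b + 1 - 1) = (1 - w) ^ (b - 1) * (1 - w) := by
        rw [show b + 1 - 1 = b - 1 + 1 by ring, Real.rpow_add h1w, Real.rpow_one]
      rw [e1, e2, hC_def]
      field_simp
    · rw [Set.indicator_of_notMem (by exact hw)]
      unfold _root_.betaPDFReal
      rw [if_neg hw, zero_mul]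
  rw [step1, step2, integral_indicator measurableSet_Ioo, integral_const_mul]
  have hbeta := real_betaIntegral (a := a - 1) (b := b + 1) (by linarith) (by linarith)
  have hsum : a - 1 + (b + 1) = a + b := by ring
  rw [hsum] at hbeta
  rw [hbeta]
  have hGa : Real.Gamma a = (a - 1) * Real.Gamma (a - 1) := by
    have h := Real.Gamma_add_one (s := a - 1) (by linarith)
    rw [sub_add_cancel] at h
    exact h
  have hGb1 : Real.Gamma (b + 1) = b * Real.Gamma b := Real.Gamma_add_one (ne_of_gt hb)
  rw [hC_def, hGa, hGb1]
  have ha1' : a - 1 ≠ 0 := by linarith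
  field_simp

lemma beta_key {c F : ℝ} (x : ℝ) (hF0 : 0 < F) (hF1 : F < 1) (hcF : 1 < c * F) :
    ∫ w, x * (1 - w) / w ∂(_root_.betaMeasure (c * F) (c * (1 - F))) = x * (1 - F) / (F - 1 / c) := by
  have hc : 0 < c := by nlinarith
  have hb : 0 < c * (1 - F) := by nlinarith
  rw [beta_key' x hcF hb]
  have h1 : c * F - 1 ≠ 0 := by linarith
  rw [show F - 1 / c = (c * F - 1) / c by field_simp, div_div_eq_mul_div]
  rw [div_eq_div_iff (by linarith) (by linarith)]
  ring

open scoped NNReal ENNReal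

/-- If `S > 0` a.s., `W ~ Beta(cF, c(1−F))` independent of `S`, and
`X^{obs} = S·W`, `S^{IBNP} = S·(1−W)`, then `S^{IBNP} = X^{obs}·(1−W)/W` a.s.; and for
`cF > 1` and fixed `x > 0`, `E[x(1−W)/W] = x(1−F)/(F − 1/c)`, which tends to
`x(1−F)/F` as `c → ∞`. -/
theorem ibnp_decomposition {Ω : Type*} [MeasurableSpace Ω] (P : Measure Ω)
    [IsProbabilityMeasure P] (S W : Ω → ℝ) (c F : ℝ) (hc : 0 < c) (hF0 : 0 < F)
    (hF1 : F < 1) (hS : ∀ᵐ ω ∂P, 0 < S ω)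
    (hW : Measure.map W P = _root_.betaMeasure (c * F) (c * (1 - F)))
    (hindep : IndepFun S W P) :
    (∀ᵐ ω ∂P, S ω * (1 - W ω) = (S ω * W ω) * ((1 - W ω) / W ω)) ∧
    (∀ x : ℝ, 0 < x → 1 < c * F →
      ∫ w, x * (1 - w) / w ∂(_root_.betaMeasure (c * F) (c * (1 - F))) = x * (1 - F) / (F - 1 / c)) ∧
    (∀ x : ℝ, 0 < x →
      Tendsto (fun c' : ℝ => ∫ w, x * (1 - w) / w ∂(_root_.betaMeasure (c' * F) (c' * (1 - F))))
        atTop (nhds (x * (1 - F) / F))) := by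
  have ha : 0 < c * F := by positivity
  have hb : 0 < c * (1 - F) := by nlinarith
  refine ⟨?_, fun x _ hcF => beta_key x hF0 hF1 hcF, ?_⟩
  · -- Part 1: need W ≠ 0 a.s.
    have hWmeas : AEMeasurable W P := by
      by_contra hmeas
      have h0 : Measure.map W P = 0 := Measure.map_of_not_aemeasurable hmeas
      rw [hW] at h0
      have hpos : 0 < ∫⁻ w, ENNReal.ofReal (_root_.betaPDFReal (c * F) (c * (1 - F)) w) := by
        rw [lintegral_pos_iff_support
          ((_root_.measurable_betaPDFReal _ _).ennreal_ofReal)]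
        have hsub : Set.Ioo (0:ℝ) 1 ⊆
            Function.support fun w => ENNReal.ofReal (_root_.betaPDFReal (c * F) (c * (1 - F)) w) := by
          intro w hw
          have hC : 0 < Real.Gamma (c * F + c * (1 - F)) /
              (Real.Gamma (c * F) * Real.Gamma (c * (1 - F))) :=
            div_pos (Real.Gamma_pos_of_pos (by linarith))
              (mul_pos (Real.Gamma_pos_of_pos ha) (Real.Gamma_pos_of_pos hb))
          have : 0 < _root_.betaPDFReal (c * F) (c * (1 - F)) w := by
            unfold _root_.betaPDFReal
            rw [if_pos ⟨hw.1, hw.2⟩]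
            exact mul_pos (mul_pos hC (Real.rpow_pos_of_pos hw.1 _))
              (Real.rpow_pos_of_pos (by linarith [hw.2]) _)
          simp only [Function.mem_support]
          exact (ENNReal.ofReal_pos.mpr this).ne'
        calc (0:ℝ≥0∞) < volume (Set.Ioo (0:ℝ) 1) := by simp
          _ ≤ _ := measure_mono hsub
      have : _root_.betaMeasure (c * F) (c * (1 - F)) Set.univ = 0 := by rw [h0]; rfl
      rw [_root_.betaMeasure, withDensity_apply _ MeasurableSet.univ,
        Measure.restrict_univ] at this
      exact absurd this (ne_of_gt hpos)
    have hW0 : ∀ᵐ ω ∂P, W ω ≠ 0 := by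
      have hmap : Measure.map W P {0} = 0 := by
        rw [hW, _root_.betaMeasure, withDensity_apply _ (measurableSet_singleton 0)]
        rw [show volume.restrict {(0:ℝ)} = 0 by
          rw [Measure.restrict_eq_zero]; simp]
        simp
      rw [Measure.map_apply_of_aemeasurable hWmeas (measurableSet_singleton 0)] at hmap
      rw [ae_iff]
      convert hmap using 2
      ext ω
      simp [Set.mem_preimage]
    filter_upwards [hW0] with ω hω
    rw [mul_assoc, mul_div_assoc', mul_comm (W ω), mul_div_assoc, div_self hω, mul_one]
  · -- Part 3
    intro x hx
    have hev : ∀ᶠ c' in atTop,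
        (∫ w, x * (1 - w) / w ∂(_root_.betaMeasure (c' * F) (c' * (1 - F)))) =
          x * (1 - F) / (F - 1 / c') := by
      filter_upwards [eventually_gt_atTop (1 / F)] with c' hc'
      have : 1 < c' * F := by
        rw [div_lt_iff₀ hF0] at hc'
        linarith
      exact beta_key x hF0 hF1 this
    refine Tendsto.congr' (EventuallyEq.symm hev) ?_
    have h1 : Tendsto (fun c' : ℝ => F - 1 / c') atTop (nhds F) := by
      have := tendsto_inv_atTop_zero (𝕜 := ℝ)
      have h2 : Tendsto (fun c' : ℝ => F - 1 / c') atTop (nhds (F - 0)) := by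
        simp only [one_div]
        exact tendsto_const_nhds.sub this
      simpa using h2
    have := (tendsto_const_nhds (x := x * (1 - F)) (f := atTop)).div h1 (ne_of_gt hF0)
    exact this
end
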